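/- Let X be a locally connected compact metric space, Y a metric space, and f: X → Y continuous. Then the induced map f̄: |X|_f → Y preserves the lengths of all rectifiable curves in |X|_f; that is, for every curve γ in |X|_f, length(f̄ ∘ γ) = length(γ). -/

import Mathlib

/-!
Since `edist (π x) (π y) = |x - y|_f ≥ edist (f x) (f y)`, the map `g` is 1-Lipschitz, which
gives `length (g ∘ γ) ≤ length γ`. For the converse it suffices to bound `edist (γ s) (γ t)` by
the diameter of `g (γ [s, t])`. The fibres of `π` are the zero sets `{y | |x - y|_f = 0}`; they
are connected, being decreasing intersections of the closures of the connected sets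
`{y | |x - y|_f < 1/n}`, and local connectedness keeps these closures inside
`{y | |x - y|_f ≤ 1/n}`. As `π` is moreover a closed continuous surjection, the preimage of the
continuum `γ [s, t]` is connected, so `edist (γ s) (γ t)` is at most the diameter of its image
under `f`, which is `g (γ [s, t])`.
-/

open ENNReal Set

/-- The connecting pseudometric induced by `f : X → Y`:
`|x−y|_f = inf {diam f(K) : K ⊆ X connected, x ∈ K, y ∈ K}` (`∞` if no such `K`). -/
noncomputable def connDist {X Y : Type*} [TopologicalSpace X] [PseudoEMetricSpace Y]
    (f : X → Y) (x y : X) : ℝ≥0∞ :=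
  ⨅ K : {K : Set X // IsConnected K ∧ x ∈ K ∧ y ∈ K}, EMetric.diam (f '' K.1)

open Filter Topology Metric

section ConnDist

variable {X Y : Type*} [TopologicalSpace X] [PseudoEMetricSpace Y] {f : X → Y} {x y : X}

lemma connDist_le_ediam_image {K : Set X} (hK : IsConnected K) (hx : x ∈ K) (hy : y ∈ K) :
    connDist f x y ≤ ediam (f '' K) :=
  iInf_le (fun K : {K : Set X // IsConnected K ∧ x ∈ K ∧ y ∈ K} => ediam (f '' K.1))
    ⟨K, hK, hx, hy⟩

lemma connDist_self (x : X) : connDist f x x = 0 :=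
  nonpos_iff_eq_zero.1 <| (connDist_le_ediam_image isConnected_singleton rfl rfl).trans_eq <| by
    rw [image_singleton, ediam_singleton]

lemma edist_le_connDist (x y : X) : edist (f x) (f y) ≤ connDist f x y :=
  le_iInf fun K => edist_le_ediam_of_mem (mem_image_of_mem f K.2.2.1) (mem_image_of_mem f K.2.2.2)

lemma connDist_comm (x y : X) : connDist f x y = connDist f y x :=
  le_antisymm (le_iInf fun K => connDist_le_ediam_image K.2.1 K.2.2.2 K.2.2.1)
    (le_iInf fun K => connDist_le_ediam_image K.2.1 K.2.2.2 K.2.2.1)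

lemma connDist_triangle (x y z : X) : connDist f x z ≤ connDist f x y + connDist f y z :=
  ENNReal.le_iInf_add_iInf fun K L => calc
    connDist f x z ≤ ediam (f '' (K.1 ∪ L.1)) :=
      connDist_le_ediam_image (K.2.1.union ⟨y, K.2.2.2, L.2.2.1⟩ L.2.1)
        (Or.inl K.2.2.1) (Or.inr L.2.2.2)
    _ ≤ ediam (f '' K.1) + ediam (f '' L.1) := by
      rw [image_union]
      exact ediam_union_le ⟨f y, mem_image_of_mem f K.2.2.2, mem_image_of_mem f L.2.2.1⟩

lemma isPreconnected_setOf_connDist_lt (x : X) (ε : ℝ≥0∞) :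
    IsPreconnected {y | connDist f x y < ε} := by
  refine isPreconnected_of_forall x fun y (hy : connDist f x y < ε) => ?_
  obtain ⟨K, hK⟩ := iInf_lt_iff.1 hy
  exact ⟨K.1, fun z hz => (connDist_le_ediam_image K.2.1 K.2.2.1 hz).trans_lt hK, K.2.2.1,
    K.2.2.2, K.2.1.isPreconnected⟩

variable [LocallyConnectedSpace X]

lemma eventually_connDist_le (hf : Continuous f) (x : X) {ε : ℝ≥0∞} (hε : 0 < ε) :
    ∀ᶠ y in 𝓝 x, connDist f x y ≤ ε := by
  have hball : f ⁻¹' eball (f x) (ε / 2) ∈ 𝓝 x :=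
    hf.continuousAt (eball_mem_nhds _ (ENNReal.half_pos hε.ne'))
  obtain ⟨V, hV, hVconn, hVsub⟩ := (locallyConnectedSpace_iff_connected_subsets.1 ‹_›) x _ hball
  filter_upwards [hV] with y hy
  calc connDist f x y ≤ ediam (f '' V) :=
        connDist_le_ediam_image ⟨⟨x, mem_of_mem_nhds hV⟩, hVconn⟩ (mem_of_mem_nhds hV) hy
    _ ≤ ediam (eball (f x) (ε / 2)) := ediam_mono (image_subset_iff.2 hVsub)
    _ ≤ 2 * (ε / 2) := ediam_eball_le
    _ = ε := ENNReal.mul_div_cancel two_ne_zero ofNat_ne_top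

lemma connDist_le_of_mem_closure (hf : Continuous f) {ε : ℝ≥0∞}
    (hy : y ∈ closure {z | connDist f x z < ε}) : connDist f x y ≤ ε := by
  refine ENNReal.le_of_forall_pos_le_add fun δ hδ _ => ?_
  obtain ⟨z, hzy, hxz⟩ := mem_closure_iff_nhds.1 hy _
    (eventually_connDist_le hf y (ENNReal.coe_pos.2 hδ))
  calc connDist f x y ≤ connDist f x z + connDist f z y := connDist_triangle x z y
    _ ≤ ε + δ := add_le_add (le_of_lt hxz) (connDist_comm (f := f) z y ▸ hzy)

end ConnDist

lemma isConnected_iInter_of_directed {X ι : Type*} [TopologicalSpace X] [CompactSpace X]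
    [NormalSpace X] [Nonempty ι] {K : ι → Set X} (hdir : Directed (· ⊇ ·) K)
    (hne : ∀ i, (K i).Nonempty) (hconn : ∀ i, IsPreconnected (K i))
    (hcl : ∀ i, IsClosed (K i)) : IsConnected (⋂ i, K i) := by
  have hcl' : IsClosed (⋂ i, K i) := isClosed_iInter hcl
  refine ⟨IsCompact.nonempty_iInter_of_directed_nonempty_isCompact_isClosed K hdir hne
    (fun i => (hcl i).isCompact) hcl, ?_⟩
  rw [isPreconnected_iff_subset_of_fully_disjoint_closed hcl']
  intro u v hu hv huv hdisj
  obtain ⟨U, V, hU, hV, huU, hvV, hUV⟩ := normal_separation hu hv hdisj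
  obtain ⟨i, hi⟩ : ∃ i, K i ⊆ U ∪ V := exists_subset_nhds_of_compactSpace hdir hcl
    fun x hx => (hU.union hV).mem_nhds ((huv hx).imp (@huU x) (@hvV x))
  have hsub (z) (hz : z ∈ ⋂ i, K i) : z ∈ K i := mem_iInter.1 hz i
  rcases (hconn i).subset_or_subset hU hV hUV hi with h | h
  · exact Or.inl fun z hz => (huv hz).resolve_right fun hzv =>
      disjoint_left.1 hUV (h (hsub z hz)) (hvV hzv)
  · exact Or.inr fun z hz => (huv hz).resolve_left fun hzu =>
      disjoint_left.1 hUV (huU hzu) (h (hsub z hz))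

lemma isConnected_setOf_connDist_eq_zero {X Y : Type*} [TopologicalSpace X] [CompactSpace X]
    [T2Space X] [LocallyConnectedSpace X] [PseudoEMetricSpace Y] {f : X → Y}
    (hf : Continuous f) (x : X) : IsConnected {y | connDist f x y = 0} := by
  have hlt {y : X} (hy : connDist f x y = 0) (n : ℕ) :
      y ∈ {y | connDist f x y < (n : ℝ≥0∞)⁻¹} :=
    show connDist f x y < _ from hy ▸ ENNReal.inv_pos.2 (natCast_ne_top n)
  have hfiber : {y | connDist f x y = 0} =
      ⋂ n : ℕ, closure {y | connDist f x y < (n : ℝ≥0∞)⁻¹} := by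
    refine Set.ext fun y => ⟨fun hy => mem_iInter.2 fun n => subset_closure (hlt hy n),
      fun hy => ?_⟩
    by_contra hne
    obtain ⟨n, hn⟩ := ENNReal.exists_inv_nat_lt hne
    exact (connDist_le_of_mem_closure hf (mem_iInter.1 hy n)).not_gt hn
  rw [hfiber]
  refine isConnected_iInter_of_directed (Antitone.directed_ge fun m n hmn => ?_)
    (fun n => ⟨x, subset_closure (hlt (connDist_self x) n)⟩)
    (fun n => (isPreconnected_setOf_connDist_lt x _).closure) (fun n => isClosed_closure)
  exact closure_mono fun y (hy : connDist f x y < _) =>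
    hy.trans_le (ENNReal.inv_le_inv.2 (Nat.cast_le.2 hmn))

section Quotient

variable {X Y Z : Type*} [TopologicalSpace X] [PseudoEMetricSpace Y] [EMetricSpace Z]
  {f : X → Y} {π : X → Z}

lemma continuous_of_edist_eq_connDist [LocallyConnectedSpace X] (hf : Continuous f)
    (hdist : ∀ x y, edist (π x) (π y) = connDist f x y) : Continuous π :=
  continuous_iff_continuousAt.2 fun x => EMetric.tendsto_nhds.2 fun ε hε => by
    obtain ⟨δ, hδ, hδε⟩ := exists_between hε
    filter_upwards [eventually_connDist_le hf x hδ] with y hy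
    rw [edist_comm, hdist]
    exact hy.trans_lt hδε

lemma isConnected_preimage_of_edist_eq_connDist [CompactSpace X] [T2Space X]
    [LocallyConnectedSpace X] (hf : Continuous f) (hπ : Function.Surjective π)
    (hdist : ∀ x y, edist (π x) (π y) = connDist f x y) {S : Set Z} (hS : IsConnected S)
    (hScl : IsClosed S) : IsConnected (π ⁻¹' S) := by
  have hπc := continuous_of_edist_eq_connDist hf hdist
  refine (hπc.isClosedMap.isQuotientMap hπc hπ).isCoinducing.isConnected_preimage_of_isClosed
    (fun z => ?_) hScl hS
  obtain ⟨x, rfl⟩ := hπ z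
  convert isConnected_setOf_connDist_eq_zero hf x using 1
  ext y
  rw [mem_preimage, mem_singleton_iff, ← edist_eq_zero, edist_comm, hdist]
  rfl

lemma edist_le_ediam_image_of_isConnected [CompactSpace X] [T2Space X]
    [LocallyConnectedSpace X] (hf : Continuous f) (hπ : Function.Surjective π)
    (hdist : ∀ x y, edist (π x) (π y) = connDist f x y) {g : Z → Y} (hg : ∀ x, g (π x) = f x)
    {S : Set Z} (hS : IsConnected S) (hScl : IsClosed S) {z z' : Z} (hz : z ∈ S)
    (hz' : z' ∈ S) : edist z z' ≤ ediam (g '' S) := by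
  obtain ⟨x, rfl⟩ := hπ z
  obtain ⟨x', rfl⟩ := hπ z'
  have hgf : g '' S = f '' (π ⁻¹' S) := by
    conv_lhs => rw [← hπ.image_preimage S]
    simp only [image_image, hg]
  rw [hdist, hgf]
  exact connDist_le_ediam_image (isConnected_preimage_of_edist_eq_connDist hf hπ hdist hS hScl)
    hz hz'

lemma lipschitzWith_one_of_edist_eq_connDist (hπ : Function.Surjective π)
    (hdist : ∀ x y, edist (π x) (π y) = connDist f x y) {g : Z → Y} (hg : ∀ x, g (π x) = f x) :
    LipschitzWith 1 g :=
  LipschitzWith.of_edist_le fun z z' => by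
    obtain ⟨x, rfl⟩ := hπ z
    obtain ⟨x', rfl⟩ := hπ z'
    rw [hg, hg, hdist]
    exact edist_le_connDist x x'

end Quotient

section Variation

variable {α E F : Type*} [LinearOrder α] [PseudoEMetricSpace E] [PseudoEMetricSpace F]

lemma ediam_image_le_eVariationOn (h : α → F) (s : Set α) : ediam (h '' s) ≤ eVariationOn h s :=
  ediam_image_le_iff.2 fun _ hx _ hy => eVariationOn.edist_le h hx hy

lemma eVariationOn_le_of_edist_le {f : α → E} {h : α → F} {s : Set α}
    (H : ∀ x ∈ s, ∀ y ∈ s, x ≤ y → edist (f x) (f y) ≤ eVariationOn h (s ∩ Icc x y)) :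
    eVariationOn f s ≤ eVariationOn h s := by
  refine iSup_le fun ⟨n, u, hu, us⟩ => ?_
  calc ∑ i ∈ Finset.range n, edist (f (u (i + 1))) (f (u i))
      ≤ ∑ i ∈ Finset.range n, eVariationOn h (s ∩ Icc (u i) (u (i + 1))) :=
        Finset.sum_le_sum fun i _ => by
          rw [edist_comm]
          exact H _ (us i) _ (us (i + 1)) (hu i.le_succ)
    _ = eVariationOn h (s ∩ Icc (u 0) (u n)) := eVariationOn.sum h hu fun i _ _ => us i
    _ ≤ eVariationOn h s := eVariationOn.mono h inter_subset_left

end Variation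

/-- for `X` a locally connected compact metric space, `Y` a metric
space and `f : X → Y` continuous, the induced map `f̄ : |X|_f → Y` preserves the
lengths of all curves in `|X|_f`: for every curve `γ` in `|X|_f`,
`length (f̄ ∘ γ) = length γ`.  Here `|X|_f` is represented by any metric space
`Z` with a surjection `π` realizing the connecting pseudometric, `f̄` by any map
`g : Z → Y` with `g ∘ π = f`, and length is the (extended) total variation. -/
theorem induced_map_preserves_length {X Y Z : Type*}
    [MetricSpace X] [CompactSpace X] [LocallyConnectedSpace X]
    [MetricSpace Y] [EMetricSpace Z]
    (f : X → Y) (hf : Continuous f)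
    (π : X → Z) (hπ : Function.Surjective π)
    (hdist : ∀ x y : X, edist (π x) (π y) = connDist f x y)
    (g : Z → Y) (hg : ∀ x : X, g (π x) = f x) :
    ∀ γ : ℝ → Z, ContinuousOn γ (Set.Icc 0 1) →
      eVariationOn (g ∘ γ) (Set.Icc 0 1) = eVariationOn γ (Set.Icc 0 1) := by
  intro γ hγ
  refine le_antisymm ?_ (eVariationOn_le_of_edist_le fun s hs t ht hst => ?_)
  · simpa only [ENNReal.coe_one, one_mul] using
      ((lipschitzWith_one_of_edist_eq_connDist hπ hdist hg).lipschitzOnWith (s := univ)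
        ).comp_eVariationOn_le (mapsTo_univ γ (Icc 0 1))
  have hsub : Icc s t ⊆ Icc 0 1 := Icc_subset_Icc hs.1 ht.2
  have hγst : ContinuousOn γ (Icc s t) := hγ.mono hsub
  calc edist (γ s) (γ t)
      ≤ ediam (g '' (γ '' Icc s t)) := edist_le_ediam_image_of_isConnected hf hπ hdist hg
        ((isConnected_Icc hst).image γ hγst) (isCompact_Icc.image_of_continuousOn hγst).isClosed
        (mem_image_of_mem γ (left_mem_Icc.2 hst)) (mem_image_of_mem γ (right_mem_Icc.2 hst))
    _ ≤ eVariationOn (g ∘ γ) (Icc 0 1 ∩ Icc s t) := by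
      rw [image_image, inter_eq_right.2 hsub]
      exact ediam_image_le_eVariationOn (g ∘ γ) _
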